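/- For any N×N matrix A with nonnegative integer entries, left multiplication by S_Aᵀ maps the subgroup (I−(A^G)ᵀ)ℤ^{E_A} into (I−Aᵀ)ℤ^N and induces a group isomorphism Φ_{S_Aᵀ} : ℤ^{E_A}/(I−(A^G)ᵀ)ℤ^{E_A} → ℤ^N/(I−Aᵀ)ℤ^N whose inverse is the homomorphism induced by left multiplication by R_Aᵀ. -/

import Mathlib

/-!
Write `S = S_A` and `R = R_A`. Counting paths of length two gives `A^G = S R` and `A = R S`, so
`(A^G)ᵀ = Rᵀ Sᵀ` and `Aᵀ = Sᵀ Rᵀ`. For any two matrices `X`, `Y` of complementary shapes, `X`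
intertwines `1 - Y X` with `1 - X Y`, hence induces a map of cokernels, and `Y X ≡ 1` modulo the
image of `1 - Y X` (and symmetrically) makes the maps induced by `X` and `Y` mutually inverse.
-/

open Matrix

/-- The edge set of the directed graph of a rectangular matrix `C` with nonnegative integer
entries: there are `C i j` edges from vertex `i` to vertex `j`. -/
def Edge {N M : ℕ} (C : Matrix (Fin N) (Fin M) ℕ) : Type :=
  Σ i : Fin N, Σ j : Fin M, Fin (C i j)

instance {N M : ℕ} (C : Matrix (Fin N) (Fin M) ℕ) : Fintype (Edge C) := by
  unfold Edge
  haveI : ∀ i, Fintype (Σ j : Fin M, Fin (C i j)) := fun i => inferInstance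
  infer_instance

instance {N M : ℕ} (C : Matrix (Fin N) (Fin M) ℕ) : DecidableEq (Edge C) := by
  unfold Edge; infer_instance

/-- The source vertex of an edge. -/
def Edge.src {N M : ℕ} {C : Matrix (Fin N) (Fin M) ℕ} (e : Edge C) : Fin N := e.1

/-- The target vertex of an edge. -/
def Edge.tar {N M : ℕ} {C : Matrix (Fin N) (Fin M) ℕ} (e : Edge C) : Fin M := e.2.1

namespace Matrix

variable {m n R : Type*} [Fintype m] [Fintype n] [DecidableEq m] [DecidableEq n] [CommRing R]

abbrev rangeOneSub (M : Matrix n n R) : AddSubgroup (n → R) :=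
  (1 - M).mulVecLin.toAddMonoidHom.range

theorem one_sub_mulVec_mem_rangeOneSub (M : Matrix n n R) (v : n → R) :
    (1 - M) *ᵥ v ∈ rangeOneSub M :=
  ⟨v, rfl⟩

theorem mulVec_mem_rangeOneSub_mul (X : Matrix m n R) (Y : Matrix n m R) {v : n → R}
    (hv : v ∈ rangeOneSub (Y * X)) : X *ᵥ v ∈ rangeOneSub (X * Y) := by
  obtain ⟨x, rfl⟩ := hv
  refine ⟨X *ᵥ x, ?_⟩
  change (1 - X * Y) *ᵥ (X *ᵥ x) = X *ᵥ ((1 - Y * X) *ᵥ x)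
  rw [mulVec_mulVec, mulVec_mulVec, Matrix.sub_mul, Matrix.mul_sub, Matrix.one_mul,
    Matrix.mul_one, Matrix.mul_assoc]

def cokerMap (X : Matrix m n R) (Y : Matrix n m R) :
    (n → R) ⧸ rangeOneSub (Y * X) →+ (m → R) ⧸ rangeOneSub (X * Y) :=
  QuotientAddGroup.map _ _ X.mulVecLin.toAddMonoidHom fun _ ↦ mulVec_mem_rangeOneSub_mul X Y

theorem cokerMap_mk (X : Matrix m n R) (Y : Matrix n m R) (v : n → R) :
    cokerMap X Y (v : (n → R) ⧸ rangeOneSub (Y * X)) = ↑(X *ᵥ v) :=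
  rfl

theorem cokerMap_cokerMap (X : Matrix m n R) (Y : Matrix n m R)
    (q : (n → R) ⧸ rangeOneSub (Y * X)) : cokerMap Y X (cokerMap X Y q) = q := by
  induction q using QuotientAddGroup.induction_on with
  | H v =>
    rw [cokerMap_mk, cokerMap_mk, mulVec_mulVec, QuotientAddGroup.eq_iff_sub_mem]
    have hdiff : (Y * X) *ᵥ v - v = (1 - Y * X) *ᵥ (-v) := by
      rw [mulVec_neg, sub_mulVec, one_mulVec]
      abel
    rw [hdiff]
    exact one_sub_mulVec_mem_rangeOneSub (Y * X) (-v)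

def cokerEquiv (X : Matrix m n R) (Y : Matrix n m R) :
    (n → R) ⧸ rangeOneSub (Y * X) ≃+ (m → R) ⧸ rangeOneSub (X * Y) where
  __ := cokerMap X Y
  invFun := cokerMap Y X
  left_inv := cokerMap_cokerMap X Y
  right_inv := cokerMap_cokerMap Y X

theorem cokerEquiv_mk (X : Matrix m n R) (Y : Matrix n m R) (v : n → R) :
    cokerEquiv X Y (v : (n → R) ⧸ rangeOneSub (Y * X)) = ↑(X *ᵥ v) :=
  rfl

theorem cokerEquiv_symm_mk (X : Matrix m n R) (Y : Matrix n m R) (w : m → R) :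
    (cokerEquiv X Y).symm (w : (m → R) ⧸ rangeOneSub (X * Y)) = ↑(Y *ᵥ w) :=
  rfl

end Matrix

namespace Edge

variable {N M K : ℕ} {R : Type*}

theorem sum_eq_sum_sum_sum [AddCommMonoid R] (C : Matrix (Fin N) (Fin M) ℕ) (f : Edge C → R) :
    ∑ e, f e = ∑ i, ∑ j, ∑ k : Fin (C i j), f ⟨i, j, k⟩ := by
  let (i : Fin N) : Fintype (Σ j : Fin M, Fin (C i j)) := inferInstance
  exact (Fintype.sum_sigma (α := fun i ↦ Σ j : Fin M, Fin (C i j)) f).trans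
    (Fintype.sum_congr _ _ fun i ↦ Fintype.sum_sigma fun p ↦ f ⟨i, p⟩)

theorem sum_src_tar [AddCommMonoid R] (C : Matrix (Fin N) (Fin M) ℕ) (g : Fin N → Fin M → R) :
    ∑ e : Edge C, g e.src e.tar = ∑ i, ∑ j, C i j • g i j := by
  simp [sum_eq_sum_sum_sum, src, tar]

variable (R) [NonAssocSemiring R]

/-- `S_C` -/
def tarMatrix (C : Matrix (Fin N) (Fin M) ℕ) : Matrix (Edge C) (Fin M) R :=
  Matrix.of fun e j ↦ if e.tar = j then 1 else 0

/-- `R_C` -/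
def srcMatrix (C : Matrix (Fin N) (Fin M) ℕ) : Matrix (Fin N) (Edge C) R :=
  Matrix.of fun i e ↦ if e.src = i then 1 else 0

theorem tarMatrix_mul_srcMatrix (C : Matrix (Fin N) (Fin M) ℕ) (D : Matrix (Fin M) (Fin K) ℕ) :
    tarMatrix R C * srcMatrix R D = Matrix.of fun e f ↦ if e.tar = f.src then 1 else 0 := by
  ext e f
  simp [tarMatrix, srcMatrix, Matrix.mul_apply, eq_comm]

theorem srcMatrix_mul_tarMatrix (C : Matrix (Fin N) (Fin M) ℕ) :
    srcMatrix R C * tarMatrix R C = C.map Nat.cast := by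
  ext i j
  rw [Matrix.mul_apply]
  refine (sum_src_tar C fun a b ↦ (if a = i then (1 : R) else 0) * if b = j then 1 else 0).trans ?_
  simp

end Edge

/-- For any `N×N` matrix `A` with nonnegative integer entries, left
multiplication by `S_Aᵀ` maps `(I−(A^G)ᵀ)ℤ^{E_A}` into `(I−Aᵀ)ℤ^N` and induces a group
isomorphism `Φ_{S_Aᵀ} : ℤ^{E_A}/(I−(A^G)ᵀ)ℤ^{E_A} → ℤ^N/(I−Aᵀ)ℤ^N` whose inverse is
induced by left multiplication by `R_Aᵀ`. -/
theorem stmt_7 (N : ℕ) (A : Matrix (Fin N) (Fin N) ℕ) :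
    let SA : Matrix (Edge A) (Fin N) ℤ := Matrix.of fun e j => if e.tar = j then 1 else 0
    let RA : Matrix (Fin N) (Edge A) ℤ := Matrix.of fun i e => if e.src = i then 1 else 0
    let AG : Matrix (Edge A) (Edge A) ℤ :=
      Matrix.of fun e f => if e.tar = f.src then 1 else 0
    let Az : Matrix (Fin N) (Fin N) ℤ := A.map (Nat.cast : ℕ → ℤ)
    (∀ v ∈ AddMonoidHom.range (1 - AGᵀ).mulVecLin.toAddMonoidHom,
        SAᵀ.mulVec v ∈ AddMonoidHom.range (1 - Azᵀ).mulVecLin.toAddMonoidHom) ∧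
    ∃ Φ : ((Edge A → ℤ) ⧸ AddMonoidHom.range (1 - AGᵀ).mulVecLin.toAddMonoidHom) ≃+
          ((Fin N → ℤ) ⧸ AddMonoidHom.range (1 - Azᵀ).mulVecLin.toAddMonoidHom),
      (∀ v : Edge A → ℤ,
          Φ (QuotientAddGroup.mk v) = QuotientAddGroup.mk (SAᵀ.mulVec v)) ∧
      (∀ w : Fin N → ℤ,
          Φ.symm (QuotientAddGroup.mk w) = QuotientAddGroup.mk (RAᵀ.mulVec w)) := by
  intro SA RA AG Az
  have hAG : AGᵀ = RAᵀ * SAᵀ := by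
    rw [← transpose_mul]
    exact congrArg transpose (Edge.tarMatrix_mul_srcMatrix ℤ A A).symm
  have hAz : Azᵀ = SAᵀ * RAᵀ := by
    rw [← transpose_mul]
    exact congrArg transpose (Edge.srcMatrix_mul_tarMatrix ℤ A).symm
  rw [hAG, hAz]
  exact ⟨fun v ↦ mulVec_mem_rangeOneSub_mul SAᵀ RAᵀ, cokerEquiv SAᵀ RAᵀ, cokerEquiv_mk _ _,
    cokerEquiv_symm_mk _ _⟩
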